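/- arXiv:1909.05065 — 2 statements merged into one kernel-verified Lean document; each statement's English description precedes it below -/
import Mathlib

section
/- Let Λ(λ₁, λ₂) = log(½ e^{2αλ₁} + ½ e^{2βλ₂}) with α, β > 0. For x₁ ∈ (0, α), x₂ ∈ (0, β) satisfying βx₁ + αx₂ = αβ, the supremum defining Λ*(x₁,x₂) is attained at λ₁* = (1/(2α)) log(βx₁), λ₂* = (1/(2β)) log(αx₂), and Λ*(x₁,x₂) = (x₁/α) log(βx₁) + (x₂/β) log(αx₂) − log(αβ/2). -/
/-!
With the weights `p = x₁ / α` and `q = x₂ / β`, which sum to `1` exactly on the line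
`βx₁ + αx₂ = αβ`, the objective in the variables `u = 2αλ₁`, `v = 2βλ₂` is
`p u + q v - log (½ eᵘ + ½ eᵛ)`. Jensen's inequality for `log` (Gibbs' inequality) bounds it by
`p log (2p) + q log (2q)`. At the given point `½ eᵘ + ½ eᵛ = αβ/2`, and the bound is attained
because the objective is unchanged when `u` and `v` are shifted by the same constant.
-/

open Real Finset

theorem sum_mul_sub_log_sum_mul_exp_le {ι : Type*} (s : Finset ι) {p a : ι → ℝ}
    (hp : ∀ i ∈ s, 0 < p i) (hp_sum : ∑ i ∈ s, p i = 1) (ha : ∀ i ∈ s, 0 < a i) (u : ι → ℝ) :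
    ∑ i ∈ s, p i * u i - log (∑ i ∈ s, a i * exp (u i)) ≤ ∑ i ∈ s, p i * log (p i / a i) := by
  set z : ι → ℝ := fun i ↦ a i * exp (u i) / p i
  have jensen := strictConcaveOn_log_Ioi.concaveOn.le_map_sum (fun i hi ↦ (hp i hi).le) hp_sum
    (p := z) fun i hi ↦ show 0 < z i by have := hp i hi; have := ha i hi; positivity
  have hmean : ∑ i ∈ s, p i • z i = ∑ i ∈ s, a i * exp (u i) :=
    sum_congr rfl fun i hi ↦ by simp only [z, smul_eq_mul]; field_simp [(hp i hi).ne']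
  have hlog : ∀ i ∈ s, p i • log (z i) = p i * u i - p i * log (p i / a i) := fun i hi ↦ by
    have hpi := hp i hi; have hai := ha i hi
    simp only [z, smul_eq_mul]
    rw [log_div (by positivity) hpi.ne', log_mul hai.ne' (exp_pos _).ne', log_exp,
      log_div hpi.ne' hai.ne']
    ring
  rw [hmean, sum_congr rfl hlog, sum_sub_distrib] at jensen
  linarith

theorem mul_add_mul_sub_log_half_exp_le {p q : ℝ} (hp : 0 < p) (hq : 0 < q) (hpq : p + q = 1)
    (u v : ℝ) :
    p * u + q * v - log ((1/2) * exp u + (1/2) * exp v) ≤ p * log (2 * p) + q * log (2 * q) := by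
  have := sum_mul_sub_log_sum_mul_exp_le univ (p := ![p, q]) (a := fun _ ↦ 1/2)
    (by simp [Fin.forall_fin_two, hp, hq]) (by simp [hpq]) (by simp) ![u, v]
  simpa [Fin.sum_univ_two, div_eq_mul_inv, mul_comm] using this

theorem div_add_div_eq_one_of_line {α β x₁ x₂ : ℝ} (hα : 0 < α) (hβ : 0 < β)
    (hline : β * x₁ + α * x₂ = α * β) : x₁ / α + x₂ / β = 1 := by
  field_simp
  linarith

theorem critical_value_eq {α β x₁ x₂ : ℝ} (hα : 0 < α) (hβ : 0 < β) (hx₁ : 0 < x₁)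
    (hx₂ : 0 < x₂) (hline : β * x₁ + α * x₂ = α * β) :
    2 * (log (β * x₁) / (2 * α)) * x₁ + 2 * (log (α * x₂) / (2 * β)) * x₂ -
        log ((1/2) * exp (2 * α * (log (β * x₁) / (2 * α))) +
          (1/2) * exp (2 * β * (log (α * x₂) / (2 * β)))) =
      (x₁ / α) * log (β * x₁) + (x₂ / β) * log (α * x₂) - log (α * β / 2) := by
  have hcrit : (1/2) * exp (2 * α * (log (β * x₁) / (2 * α))) +
      (1/2) * exp (2 * β * (log (α * x₂) / (2 * β))) = α * β / 2 := by
    rw [mul_div_cancel₀ _ (by positivity), mul_div_cancel₀ _ (by positivity),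
      exp_log (by positivity), exp_log (by positivity)]
    linarith
  rw [hcrit]
  field_simp

theorem critical_value_eq_entropy {α β x₁ x₂ : ℝ} (hα : 0 < α) (hβ : 0 < β) (hx₁ : 0 < x₁)
    (hx₂ : 0 < x₂) (hline : β * x₁ + α * x₂ = α * β) :
    (x₁ / α) * log (β * x₁) + (x₂ / β) * log (α * x₂) - log (α * β / 2) =
      (x₁ / α) * log (2 * (x₁ / α)) + (x₂ / β) * log (2 * (x₂ / β)) := by
  have h₁ : β * x₁ = α * β / 2 * (2 * (x₁ / α)) := by field_simp
  have h₂ : α * x₂ = α * β / 2 * (2 * (x₂ / β)) := by field_simp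
  rw [h₁, h₂, log_mul (x := α * β / 2) (by positivity) (by positivity),
    log_mul (x := α * β / 2) (by positivity) (by positivity)]
  linear_combination log (α * β / 2) * div_add_div_eq_one_of_line hα hβ hline

/-- On the line `βx₁ + αx₂ = αβ` with `x₁ ∈ (0,α)`, `x₂ ∈ (0,β)`, the supremum
defining `Λ*(x₁,x₂)` is attained at `λ₁* = log(βx₁)/(2α)`, `λ₂* = log(αx₂)/(2β)`,
with value `(x₁/α)log(βx₁) + (x₂/β)log(αx₂) − log(αβ/2)`. -/
theorem legendre_on_line (α β x₁ x₂ : ℝ) (hα : 0 < α) (hβ : 0 < β)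
    (hx₁ : x₁ ∈ Set.Ioo 0 α) (hx₂ : x₂ ∈ Set.Ioo 0 β)
    (hline : β * x₁ + α * x₂ = α * β) :
    (∀ p : ℝ × ℝ,
      2 * p.1 * x₁ + 2 * p.2 * x₂ -
        Real.log ((1/2) * Real.exp (2 * α * p.1) + (1/2) * Real.exp (2 * β * p.2)) ≤
      2 * (Real.log (β * x₁) / (2 * α)) * x₁ + 2 * (Real.log (α * x₂) / (2 * β)) * x₂ -
        Real.log ((1/2) * Real.exp (2 * α * (Real.log (β * x₁) / (2 * α))) +
          (1/2) * Real.exp (2 * β * (Real.log (α * x₂) / (2 * β))))) ∧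
    (2 * (Real.log (β * x₁) / (2 * α)) * x₁ + 2 * (Real.log (α * x₂) / (2 * β)) * x₂ -
        Real.log ((1/2) * Real.exp (2 * α * (Real.log (β * x₁) / (2 * α))) +
          (1/2) * Real.exp (2 * β * (Real.log (α * x₂) / (2 * β)))) =
      (x₁ / α) * Real.log (β * x₁) + (x₂ / β) * Real.log (α * x₂) -
        Real.log (α * β / 2)) := by
  obtain ⟨hx₁, -⟩ := hx₁
  obtain ⟨hx₂, -⟩ := hx₂
  have hvalue := critical_value_eq hα hβ hx₁ hx₂ hline
  refine ⟨fun l ↦ ?_, hvalue⟩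
  calc 2 * l.1 * x₁ + 2 * l.2 * x₂ - log ((1/2) * exp (2 * α * l.1) + (1/2) * exp (2 * β * l.2))
      = (x₁ / α) * (2 * α * l.1) + (x₂ / β) * (2 * β * l.2) -
          log ((1/2) * exp (2 * α * l.1) + (1/2) * exp (2 * β * l.2)) := by field_simp
    _ ≤ (x₁ / α) * log (2 * (x₁ / α)) + (x₂ / β) * log (2 * (x₂ / β)) :=
      mul_add_mul_sub_log_half_exp_le (by positivity) (by positivity)
        (div_add_div_eq_one_of_line hα hβ hline) _ _
    _ = _ := by rw [hvalue, critical_value_eq_entropy hα hβ hx₁ hx₂ hline]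
end

section
/- Let X, Y be elements of the Lie algebra 𝔤 of a matrix Lie group, and suppose ‖e^{ad_X} e^{s·ad_Y} − I‖ ≤ √2 − 1 for all s ∈ [0,1]. Then |log(exp(X)exp(Y)) − X − Y| ≤ (e^{‖ad_X‖} − 1)·|Y|·∑_{m=1}^∞ (√2 − 1)^{m−1}/(m(m+1)), whenever log(exp(X)exp(tY)) is well-defined for t ∈ [0,1] and satisfies the integral Baker–Campbell–Hausdorff formula log(exp(X)exp(Y)) = X + Y + (∫_0^1 ∑_{m=1}^∞ ((−1)^m/(m(m+1)))(e^{ad_X}e^{s·ad_Y} − I)^m ds) Y. -/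
open NormedSpace Nat

set_option maxHeartbeats 1000000 in
lemma my_norm_exp_sub_one_le {A : Type*} [NormedRing A] [NormedAlgebra ℝ A] [CompleteSpace A]
    (x : A) : ‖exp x - 1‖ ≤ Real.exp ‖x‖ - 1 := by
  have hs : Summable fun n : ℕ => ((n ! : ℝ)⁻¹) • x ^ n := expSeries_summable' (𝕂 := ℝ) x
  have hs' : Summable fun n : ℕ => (((n+1) ! : ℝ)⁻¹) • x ^ (n+1) :=
    (summable_nat_add_iff 1).2 hs
  have h1 : exp x - 1 = ∑' n : ℕ, (((n+1) ! : ℝ)⁻¹) • x ^ (n+1) := by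
    have he : exp x = ∑' n : ℕ, ((n ! : ℝ)⁻¹) • x ^ n := by rw [exp_eq_tsum ℝ]
    rw [he, Summable.tsum_eq_zero_add hs]
    simp
  have hrs : Summable fun n : ℕ => ((n ! : ℝ)⁻¹) * ‖x‖ ^ n := by
    have := norm_expSeries_summable' (𝕂 := ℝ) (‖x‖ : ℝ)
    simpa [norm_smul, abs_of_nonneg, Real.norm_eq_abs, abs_pow, abs_norm] using this
  have hrs' : Summable fun n : ℕ => (((n+1) ! : ℝ)⁻¹) * ‖x‖ ^ (n+1) :=
    (summable_nat_add_iff 1).2 hrs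
  have h2 : Real.exp ‖x‖ - 1 = ∑' n : ℕ, (((n+1) ! : ℝ)⁻¹) * ‖x‖ ^ (n+1) := by
    have : Real.exp ‖x‖ = ∑' n : ℕ, ((n ! : ℝ)⁻¹) * ‖x‖ ^ n := by
      rw [Real.exp_eq_exp_ℝ, exp_eq_tsum ℝ]
      simp [smul_eq_mul]
    rw [this, Summable.tsum_eq_zero_add hrs]
    simp
  rw [h1, h2]
  have key : ∀ n : ℕ, ‖(((n+1) ! : ℝ)⁻¹) • x ^ (n+1)‖ ≤ (((n+1) ! : ℝ)⁻¹) * ‖x‖ ^ (n+1) := by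
    intro n
    rw [norm_smul]
    gcongr
    · simp [abs_of_nonneg, Real.norm_eq_abs]
    · exact norm_pow_le' _ (Nat.succ_pos n)
  refine (norm_tsum_le_tsum_norm ?_).trans (Summable.tsum_le_tsum key ?_ hrs')
  · exact hrs'.of_nonneg_of_le (fun n => norm_nonneg _) key
  · exact hrs'.of_nonneg_of_le (fun n => norm_nonneg _) key

lemma my_exp_apply_eq_self {𝔤 : Type*} [NormedAddCommGroup 𝔤] [NormedSpace ℝ 𝔤]
    [CompleteSpace 𝔤] (T : 𝔤 →L[ℝ] 𝔤) (Y : 𝔤) (h : T Y = 0) : exp T Y = Y := by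
  have he : exp T = ∑' n : ℕ, ((n ! : ℝ)⁻¹) • T ^ n := by rw [exp_eq_tsum ℝ]
  have hs : Summable fun n : ℕ => ((n ! : ℝ)⁻¹) • T ^ n := expSeries_summable' (𝕂 := ℝ) T
  have := (ContinuousLinearMap.apply ℝ 𝔤 Y).map_tsum hs
  rw [he]
  simp only [ContinuousLinearMap.apply_apply] at this
  rw [this, tsum_eq_single 0]
  · simp
  · intro n hn
    obtain ⟨m, rfl⟩ := Nat.exists_eq_succ_of_ne_zero hn
    simp only [ContinuousLinearMap.coe_smul', Pi.smul_apply]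
    rw [pow_succ, ContinuousLinearMap.mul_apply, h, map_zero, smul_zero]

lemma my_pow_apply_norm_le {𝔤 : Type*} [NormedAddCommGroup 𝔤] [NormedSpace ℝ 𝔤]
    (T : 𝔤 →L[ℝ] 𝔤) (v : 𝔤) : ∀ m : ℕ, ‖(T ^ m) v‖ ≤ ‖T‖ ^ m * ‖v‖
  | 0 => by simp
  | (m+1) => by
    rw [pow_succ, ContinuousLinearMap.mul_apply]
    calc ‖(T ^ m) (T v)‖ ≤ ‖T‖ ^ m * ‖T v‖ := my_pow_apply_norm_le T (T v) m
      _ ≤ ‖T‖ ^ m * (‖T‖ * ‖v‖) := by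
          exact mul_le_mul_of_nonneg_left (T.le_opNorm v) (pow_nonneg (norm_nonneg _) _)
      _ = ‖T‖ ^ (m+1) * ‖v‖ := by rw [pow_succ]; ring


set_option maxHeartbeats 1000000 in
/-- The Baker–Campbell–Hausdorff estimate: if `Z = log(exp X exp Y)` satisfies the
integral BCH formula, `ad_Y Y = 0`, and `‖e^{ad_X}e^{s·ad_Y} − I‖ ≤ √2 − 1` on `[0,1]`,
then `|Z − X − Y| ≤ (e^{‖ad_X‖} − 1)|Y| ∑ (√2−1)^{m−1}/(m(m+1))`. -/
theorem BCH_estimate {𝔤 : Type*} [NormedAddCommGroup 𝔤] [NormedSpace ℝ 𝔤]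
    [CompleteSpace 𝔤] (X Y Z : 𝔤) (adX adY : 𝔤 →L[ℝ] 𝔤)
    (hadY : adY Y = 0)
    (hnorm : ∀ s ∈ Set.Icc (0:ℝ) 1,
      ‖NormedSpace.exp adX * NormedSpace.exp (s • adY) - 1‖ ≤ Real.sqrt 2 - 1)
    (hBCH : Z = X + Y + ∫ s in (0:ℝ)..1,
      (∑' m : ℕ, ((-1 : ℝ) ^ (m + 1) / (((m : ℝ) + 1) * ((m : ℝ) + 2))) •
        (NormedSpace.exp adX * NormedSpace.exp (s • adY) - 1) ^ (m + 1)) Y) :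
    ‖Z - X - Y‖ ≤ (Real.exp ‖adX‖ - 1) * ‖Y‖ *
      ∑' m : ℕ, (Real.sqrt 2 - 1) ^ m / (((m : ℝ) + 1) * ((m : ℝ) + 2)) := by
  set r : ℝ := Real.sqrt 2 - 1 with hr
  have hr0 : 0 ≤ r := by
    have : (1:ℝ) ≤ Real.sqrt 2 := by
      rw [show (1:ℝ) = Real.sqrt 1 by simp]
      exact Real.sqrt_le_sqrt (by norm_num)
    linarith
  have hr1 : r < 1 := by
    have : Real.sqrt 2 < 2 := by
      have : Real.sqrt 2 < Real.sqrt 4 := by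
        apply Real.sqrt_lt_sqrt <;> norm_num
      simpa [show Real.sqrt 4 = 2 by
        rw [show (4:ℝ) = 2^2 by norm_num, Real.sqrt_sq (by norm_num)]] using this
    linarith
  set C : ℝ := (Real.exp ‖adX‖ - 1) * ‖Y‖ with hC
  have hC0 : 0 ≤ C := by
    apply mul_nonneg _ (norm_nonneg _)
    have := Real.one_le_exp (norm_nonneg adX)
    linarith
  set A : ℝ → (𝔤 →L[ℝ] 𝔤) := fun s => exp adX * exp (s • adY) - 1 with hA
  -- the bounding series
  set g : ℕ → ℝ := fun m => r ^ m / (((m : ℝ) + 1) * ((m : ℝ) + 2)) with hg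
  have hg0 : ∀ m, 0 ≤ g m := by
    intro m
    apply div_nonneg (pow_nonneg hr0 _)
    positivity
  have hgs : Summable g := by
    refine (summable_geometric_of_lt_one hr0 hr1).of_nonneg_of_le hg0 (fun m => ?_)
    exact div_le_self (pow_nonneg hr0 _) (by nlinarith [Nat.cast_nonneg (α := ℝ) m])
  -- key pointwise bound
  have key : ∀ s ∈ Set.uIoc (0:ℝ) 1,
      ‖(∑' m : ℕ, ((-1 : ℝ) ^ (m + 1) / (((m : ℝ) + 1) * ((m : ℝ) + 2))) •
        (A s) ^ (m + 1)) Y‖ ≤ C * ∑' m, g m := by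
    intro s hs
    have hs' : s ∈ Set.Icc (0:ℝ) 1 := by
      rw [Set.uIoc_of_le (by norm_num : (0:ℝ) ≤ 1)] at hs
      exact ⟨le_of_lt hs.1, hs.2⟩
    have hAs : ‖A s‖ ≤ r := hnorm s hs'
    -- A s Y = (exp adX - 1) Y
    have hAY : A s Y = (exp adX - 1) Y := by
      simp only [hA, ContinuousLinearMap.sub_apply, ContinuousLinearMap.mul_apply,
        ContinuousLinearMap.one_apply]
      rw [my_exp_apply_eq_self (s • adY) Y (by simp [hadY])]
    have hAYnorm : ‖A s Y‖ ≤ C := by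
      rw [hAY, hC]
      calc ‖(exp adX - 1) Y‖ ≤ ‖exp adX - 1‖ * ‖Y‖ := (exp adX - 1).le_opNorm Y
        _ ≤ (Real.exp ‖adX‖ - 1) * ‖Y‖ := by
            gcongr
            exact my_norm_exp_sub_one_le adX
    set c : ℕ → ℝ := fun m => (-1 : ℝ) ^ (m + 1) / (((m : ℝ) + 1) * ((m : ℝ) + 2)) with hc
    have hcabs : ∀ m, |c m| = 1 / (((m : ℝ) + 1) * ((m : ℝ) + 2)) := by
      intro m
      rw [hc, abs_div, abs_pow, abs_neg, abs_one, one_pow, abs_of_pos (by positivity)]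
    -- per-term bound on vectors
    have hterm : ∀ m : ℕ, ‖(c m • (A s) ^ (m + 1)) Y‖ ≤ C * g m := by
      intro m
      simp only [ContinuousLinearMap.coe_smul', Pi.smul_apply, norm_smul, Real.norm_eq_abs]
      rw [hcabs m]
      have h1 : ‖((A s) ^ (m + 1)) Y‖ ≤ r ^ m * C := by
        rw [pow_succ, ContinuousLinearMap.mul_apply]
        calc ‖((A s) ^ m) (A s Y)‖ ≤ ‖A s‖ ^ m * ‖A s Y‖ := my_pow_apply_norm_le _ _ m
          _ ≤ r ^ m * C :=
              mul_le_mul (pow_le_pow_left₀ (norm_nonneg _) hAs m) hAYnorm (norm_nonneg _)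
                (pow_nonneg hr0 _)
      calc 1 / (((m : ℝ) + 1) * ((m : ℝ) + 2)) * ‖((A s) ^ (m + 1)) Y‖
          ≤ 1 / (((m : ℝ) + 1) * ((m : ℝ) + 2)) * (r ^ m * C) := by
            apply mul_le_mul_of_nonneg_left h1 (by positivity)
        _ = C * g m := by rw [hg]; ring
    -- summability of the operator series
    have hTs : Summable fun m : ℕ => c m • (A s) ^ (m + 1) := by
      apply Summable.of_norm
      refine ((summable_geometric_of_lt_one hr0 hr1).mul_left r).of_nonneg_of_le
        (fun m => norm_nonneg _) (fun m => ?_)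
      calc ‖c m • (A s) ^ (m+1)‖ = |c m| * ‖(A s) ^ (m+1)‖ := by
            rw [show |c m| = ‖c m‖ from rfl]
            exact norm_smul (c m) ((A s) ^ (m+1))
        _ ≤ 1 * (r ^ (m+1)) := by
            rw [hcabs m]
            apply mul_le_mul
            · rw [div_le_one (by positivity)]; nlinarith [Nat.cast_nonneg (α := ℝ) m]
            · calc ‖(A s) ^ (m+1)‖ ≤ ‖A s‖ ^ (m+1) := norm_pow_le' _ (Nat.succ_pos m)
                _ ≤ r ^ (m+1) := pow_le_pow_left₀ (norm_nonneg _) hAs _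
            · exact norm_nonneg _
            · norm_num
        _ = r * r ^ m := by rw [one_mul, pow_succ]; ring
    -- move tsum through application
    have happ := (ContinuousLinearMap.apply ℝ 𝔤 Y).map_tsum hTs
    simp only [ContinuousLinearMap.apply_apply] at happ
    rw [happ]
    have hsum_vec : Summable fun m : ℕ => ‖(c m • (A s) ^ (m + 1)) Y‖ :=
      (hgs.mul_left C).of_nonneg_of_le (fun m => norm_nonneg _) hterm
    calc ‖∑' m : ℕ, (c m • (A s) ^ (m + 1)) Y‖ ≤ ∑' m, ‖(c m • (A s) ^ (m + 1)) Y‖ :=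
          norm_tsum_le_tsum_norm hsum_vec
      _ ≤ ∑' m, C * g m := Summable.tsum_le_tsum hterm hsum_vec (hgs.mul_left C)
      _ = C * ∑' m, g m := by rw [tsum_mul_left]
  -- conclude
  have hZ : Z - X - Y = ∫ s in (0:ℝ)..1,
      (∑' m : ℕ, ((-1 : ℝ) ^ (m + 1) / (((m : ℝ) + 1) * ((m : ℝ) + 2))) • (A s) ^ (m + 1)) Y := by
    rw [hBCH]; abel
  rw [hZ]
  have := intervalIntegral.norm_integral_le_of_norm_le_const key
  simpa using this
end
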